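/- (Key greedy recursion lemma) Let f be a monotone submodular set function on subsets of a finite type with f(∅) = 0, let OPT = f(S) for some fixed set S with |S| = k ≥ 1, and let I_{t+1} be obtained from I_t by adding an element of maximal marginal gain over all elements. Then OPT − f(I_{t+1}) ≤ (1 − 1/k)·(OPT − f(I_t)). -/

import Mathlib

/-!
Submodularity bounds the joint gain of the elements of `S` over `I` by the sum of their
individual marginal gains, each of which is at most the greedy gain `g`; with monotonicity this
gives `f S - f I ≤ k g`. Hence `f S - f (insert x I) = (f S - f I) - g ≤ (1 - 1/k) (f S - f I)`.
-/

open Finset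

variable {α β : Type*} [DecidableEq α] [AddCommGroup β] [PartialOrder β] [IsOrderedAddMonoid β]

theorem sub_le_sum_marginal_of_submodular {f : Finset α → β}
    (hsub : ∀ (I J : Finset α) (x : α), I ⊆ J → x ∉ J →
      f (insert x J) + f I ≤ f (insert x I) + f J)
    (I T : Finset α) : f (I ∪ T) - f I ≤ ∑ y ∈ T, (f (insert y I) - f I) := by
  induction T using Finset.induction_on with
  | empty => simp
  | insert a T haT ih =>
    rw [sum_insert haT, union_insert]
    by_cases haI : a ∈ I
    · simpa [insert_eq_of_mem haI, insert_eq_of_mem (mem_union_left T haI)] using ih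
    · have haIT : a ∉ I ∪ T := by simp [haI, haT]
      calc f (insert a (I ∪ T)) - f I
          = (f (insert a (I ∪ T)) - f (I ∪ T)) + (f (I ∪ T) - f I) := by abel
        _ ≤ (f (insert a I) - f I) + ∑ y ∈ T, (f (insert y I) - f I) :=
          add_le_add (sub_le_sub_iff.2 (hsub I (I ∪ T) a subset_union_left haIT)) ih

theorem sub_le_card_nsmul_greedy_gain {f : Finset α → β}
    (hmono : ∀ I J : Finset α, I ⊆ J → f I ≤ f J)
    (hsub : ∀ (I J : Finset α) (x : α), I ⊆ J → x ∉ J →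
      f (insert x J) + f I ≤ f (insert x I) + f J)
    (S I : Finset α) (x : α) (hgreedy : ∀ y, f (insert y I) - f I ≤ f (insert x I) - f I) :
    f S - f I ≤ #S • (f (insert x I) - f I) :=
  calc f S - f I
      ≤ f (I ∪ S) - f I := sub_le_sub_right (hmono _ _ subset_union_right) _
    _ ≤ ∑ y ∈ S, (f (insert y I) - f I) := sub_le_sum_marginal_of_submodular hsub I S
    _ ≤ #S • (f (insert x I) - f I) := sum_le_card_nsmul S _ _ fun y _ => hgreedy y

theorem greedy_recursion_general (m k : ℕ) (f : Finset (Fin m) → ℝ)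
    (hmono : ∀ I J : Finset (Fin m), I ⊆ J → f I ≤ f J)
    (hsub : ∀ (I J : Finset (Fin m)) (x : Fin m), I ⊆ J → x ∉ J →
      f (insert x J) + f I ≤ f (insert x I) + f J)
    (S : Finset (Fin m)) (hS : S.card = k)
    (It It1 : Finset (Fin m)) (x : Fin m) (hx : It1 = insert x It)
    (hgreedy : ∀ y : Fin m, f (insert y It) - f It ≤ f (insert x It) - f It) :
    f S - f It1 ≤ (1 - 1 / (k : ℝ)) * (f S - f It) := by
  subst hx hS
  have hgain : 0 ≤ f (insert x It) - f It := sub_nonneg.2 (hmono _ _ (subset_insert x It))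
  have hbound := sub_le_card_nsmul_greedy_gain hmono hsub S It x hgreedy
  rw [nsmul_eq_mul'] at hbound
  -- for `#S = 0` this still holds, as `(f S - f It) / 0 = 0`
  have hshare : (f S - f It) / #S ≤ f (insert x It) - f It :=
    div_le_of_le_mul₀ (Nat.cast_nonneg _) hgain hbound
  rw [sub_mul, one_mul, one_div_mul_eq_div]
  linarith

theorem greedy_recursion (m k : ℕ) (hk : 1 ≤ k) (f : Finset (Fin m) → ℝ)
    (hmono : ∀ I J : Finset (Fin m), I ⊆ J → f I ≤ f J)
    (hsub : ∀ (I J : Finset (Fin m)) (x : Fin m), I ⊆ J → x ∉ J →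
      f (insert x J) + f I ≤ f (insert x I) + f J)
    (hempty : f ∅ = 0)
    (S : Finset (Fin m)) (hS : S.card = k)
    (It It1 : Finset (Fin m)) (x : Fin m) (hx : It1 = insert x It)
    (hgreedy : ∀ y : Fin m, f (insert y It) - f It ≤ f (insert x It) - f It) :
    f S - f It1 ≤ (1 - 1 / (k : ℝ)) * (f S - f It) :=
  greedy_recursion_general m k f hmono hsub S hS It It1 x hx hgreedy
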